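/- Let λ_k be a triple eigenvalue (cλ_k+d ≠ 0) with chain y_k, y_{k+1}, y_{k+2}. Define Q_k = ‖y_{k+1}‖² + (ad-bc)·( y_{k+1}(1)/(cλ_k+d) - c·y_k(1)/(cλ_k+d)² )². Then ∫₀¹ y_{k+2} y_k dx = -(ad-bc)·( y_{k+2}(1)/(cλ_k+d) - c·y_{k+1}(1)/(cλ_k+d)² + c²·y_k(1)/(cλ_k+d)³ )·y_k(1)/(cλ_k+d) + Q_k; equivalently, Q_k = ∫₀¹ y_{k+2} y_k dx + (ad-bc)·𝔄(y_{k+2})·𝔄(y_k) where 𝔄 denotes the indicated boundary expressions. -/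

import Mathlib

open MeasureTheory Set

/-- Lemma 4.3(a): inner product of the second associated function with the eigenfunction
at a triple eigenvalue `λk ≠ -d/c`, with remainder term `Q_k`. -/
theorem second_assoc_eigen_inner_product_Q
    (a b c d β : ℝ) (habcd : a * d - b * c < 0) (hac : a * c ≠ 0)
    (hβ0 : 0 ≤ β) (hβπ : β < Real.pi)
    (q : ℝ → ℝ) (hq : ContinuousOn q (Icc (0:ℝ) 1))
    (lam : ℝ) (hcd : c * lam + d ≠ 0)
    (y0 y0' y0'' y1 y1' y1'' : ℝ → ℝ)
    (hy0 : ∀ x ∈ Icc (0:ℝ) 1, HasDerivAt y0 (y0' x) x)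
    (hy0' : ∀ x ∈ Icc (0:ℝ) 1, HasDerivAt y0' (y0'' x) x)
    (hy0'' : ContinuousOn y0'' (Icc (0:ℝ) 1))
    (hy1 : ∀ x ∈ Icc (0:ℝ) 1, HasDerivAt y1 (y1' x) x)
    (hy1' : ∀ x ∈ Icc (0:ℝ) 1, HasDerivAt y1' (y1'' x) x)
    (hy1'' : ContinuousOn y1'' (Icc (0:ℝ) 1))
    (hode0 : ∀ x ∈ Icc (0:ℝ) 1, -y0'' x + q x * y0 x = lam * y0 x)
    (hode1 : ∀ x ∈ Icc (0:ℝ) 1, -y1'' x + q x * y1 x = lam * y1 x + y0 x)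
    (hbc00 : y0 0 * Real.cos β = y0' 0 * Real.sin β)
    (hbc01 : y1 0 * Real.cos β = y1' 0 * Real.sin β)
    (hbc10 : (a * lam + b) * y0 1 = (c * lam + d) * y0' 1)
    (hbc11 : (a * lam + b) * y1 1 + a * y0 1 = (c * lam + d) * y1' 1 + c * y0' 1)
    (y2 y2' y2'' : ℝ → ℝ)
    (hy2 : ∀ x ∈ Icc (0:ℝ) 1, HasDerivAt y2 (y2' x) x)
    (hy2' : ∀ x ∈ Icc (0:ℝ) 1, HasDerivAt y2' (y2'' x) x)
    (hy2'' : ContinuousOn y2'' (Icc (0:ℝ) 1))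
    (hode2 : ∀ x ∈ Icc (0:ℝ) 1, -y2'' x + q x * y2 x = lam * y2 x + y1 x)
    (hbc02 : y2 0 * Real.cos β = y2' 0 * Real.sin β)
    (hbc12 : (a * lam + b) * y2 1 + a * y1 1 = (c * lam + d) * y2' 1 + c * y1' 1)
    :
    ∫ x in (0:ℝ)..1, y2 x * y0 x
      = -(a * d - b * c) * (y2 1 / (c * lam + d) - c * y1 1 / (c * lam + d) ^ 2
            + c ^ 2 * y0 1 / (c * lam + d) ^ 3)
          * (y0 1 / (c * lam + d))
        + ((∫ x in (0:ℝ)..1, (y1 x) ^ 2)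
            + (a * d - b * c)
              * (y1 1 / (c * lam + d) - c * y0 1 / (c * lam + d) ^ 2) ^ 2) := by
  have hIcc : Set.uIcc (0:ℝ) 1 = Icc (0:ℝ) 1 := Set.uIcc_of_le (by norm_num)
  -- continuity facts
  have hc0 : ContinuousOn y0 (Icc (0:ℝ) 1) :=
    fun x hx => (hy0 x hx).continuousAt.continuousWithinAt
  have hc1 : ContinuousOn y1 (Icc (0:ℝ) 1) :=
    fun x hx => (hy1 x hx).continuousAt.continuousWithinAt
  have hc2 : ContinuousOn y2 (Icc (0:ℝ) 1) :=
    fun x hx => (hy2 x hx).continuousAt.continuousWithinAt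
  -- derivative of the Wronskian-type function
  have key : ∀ x ∈ Set.uIcc (0:ℝ) 1,
      HasDerivAt (fun t => y2 t * y1' t - y2' t * y1 t)
        ((y1 x) ^ 2 - y2 x * y0 x) x := by
    intro x hx
    rw [hIcc] at hx
    have h := ((hy2 x hx).mul (hy1' x hx)).sub ((hy2' x hx).mul (hy1 x hx))
    have e : (y1 x) ^ 2 - y2 x * y0 x
        = y2' x * y1' x + y2 x * y1'' x - (y2'' x * y1 x + y2' x * y1' x) := by
      have h1 := hode1 x hx
      have h2 := hode2 x hx
      linear_combination (y2 x) * h1 - (y1 x) * h2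
    rw [e]; exact h
  have hint : IntervalIntegrable (fun x => (y1 x) ^ 2 - y2 x * y0 x) volume 0 1 := by
    apply ContinuousOn.intervalIntegrable
    rw [hIcc]
    exact (hc1.pow 2).sub (hc2.mul hc0)
  have hftc := intervalIntegral.integral_eq_sub_of_hasDerivAt key hint
  -- boundary value at 0 is zero
  have hW0 : y2 0 * y1' 0 - y2' 0 * y1 0 = 0 := by
    have p := Real.sin_sq_add_cos_sq β
    linear_combination (-(y2 0 * y1' 0 - y2' 0 * y1 0)) * p
      + (y1' 0 * Real.cos β + y1 0 * Real.sin β) * hbc02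
      - (y2' 0 * Real.cos β + y2 0 * Real.sin β) * hbc01
  -- split the integral
  have hi1 : IntervalIntegrable (fun x => (y1 x) ^ 2) volume 0 1 := by
    apply ContinuousOn.intervalIntegrable; rw [hIcc]; exact hc1.pow 2
  have hi2 : IntervalIntegrable (fun x => y2 x * y0 x) volume 0 1 := by
    apply ContinuousOn.intervalIntegrable; rw [hIcc]; exact hc2.mul hc0
  have hsplit : (∫ x in (0:ℝ)..1, ((y1 x) ^ 2 - y2 x * y0 x))
      = (∫ x in (0:ℝ)..1, (y1 x) ^ 2) - ∫ x in (0:ℝ)..1, y2 x * y0 x :=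
    intervalIntegral.integral_sub hi1 hi2
  rw [hsplit] at hftc
  -- boundary algebra at 1
  have hW1 : y2 1 * y1' 1 - y2' 1 * y1 1
      = (a * d - b * c) * ((y2 1 / (c * lam + d) - c * y1 1 / (c * lam + d) ^ 2
            + c ^ 2 * y0 1 / (c * lam + d) ^ 3) * (y0 1 / (c * lam + d))
          - (y1 1 / (c * lam + d) - c * y0 1 / (c * lam + d) ^ 2) ^ 2) := by
    have e0 : y0' 1 = (a * lam + b) * y0 1 / (c * lam + d) := by
      rw [eq_div_iff hcd]; linarith [hbc10]
    have e1 : y1' 1 = ((a * lam + b) * y1 1 + a * y0 1 - c * y0' 1) / (c * lam + d) := by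
      rw [eq_div_iff hcd]; linarith [hbc11]
    have e2 : y2' 1 = ((a * lam + b) * y2 1 + a * y1 1 - c * y1' 1) / (c * lam + d) := by
      rw [eq_div_iff hcd]; linarith [hbc12]
    rw [e2, e1, e0]
    have hD : lam * c + d ≠ 0 := by rwa [mul_comm] at hcd
    field_simp
    ring
  have hz : y2 0 * y1' 0 - y2' 0 * y1 0 = (0:ℝ) := hW0
  -- finish
  have : (∫ x in (0:ℝ)..1, y2 x * y0 x)
      = (∫ x in (0:ℝ)..1, (y1 x) ^ 2) - (y2 1 * y1' 1 - y2' 1 * y1 1) := by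
    have := hftc
    rw [hz] at this
    linarith
  rw [this, hW1]
  ring
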